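/- Let Γ be a group, G = ℤ ≀ Γ, N = ⊕_Γ ℤ. Let Θ be a nontrivial finitely generated subgroup of Γ, and let x ∈ N satisfy supp(x) ⊆ Θ and Σ_{θ∈Θ} x(θ) = 0. Then x ∈ [G,N] and the mixed commutator length of x satisfies cl_{G,N}(x) ≤ rk(Θ), where rk(Θ) is the minimal number of generators of Θ. -/

import Mathlib

open Finsupp

variable (A : Type*) [AddCommGroup A] (Γ : Type*) [Group Γ]

/-- The multiplicative group structure on `AddAut M` used by the older Mathlib. -/
instance addAutGroupOld {M : Type*} [Add M] : Group (AddAut M) where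
  mul g h := AddEquiv.trans h g
  one := AddEquiv.refl _
  inv := AddEquiv.symm
  mul_assoc _ _ _ := rfl
  one_mul _ := rfl
  mul_one _ := rfl
  inv_mul_cancel := AddEquiv.self_trans_symm

@[simp]
theorem addAutOld_mul_apply {M : Type*} [Add M] (e₁ e₂ : AddAut M) (m : M) :
    (e₁ * e₂) m = e₁ (e₂ m) :=
  rfl

@[simp]
theorem addAutOld_one_apply {M : Type*} [Add M] (m : M) : (1 : AddAut M) m = m :=
  rfl

/-- The shift action of `Γ` on `⊕_Γ A`: `(γ • u) x = u (γ⁻¹ * x)`. -/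
noncomputable def shiftHom : Γ →* AddAut (Γ →₀ A) where
  toFun γ := (Finsupp.domCongr (Equiv.mulLeft γ) : (Γ →₀ A) ≃+ (Γ →₀ A))
  map_one' := by
    apply AddEquiv.ext; intro f; ext a
    simp [Finsupp.domCongr_apply, Finsupp.equivMapDomain_apply, Equiv.Perm.one_symm, Equiv.Perm.one_apply]
  map_mul' γ γ' := by
    apply AddEquiv.ext; intro f; ext a
    simp [addAutOld_mul_apply, Finsupp.domCongr_apply, Finsupp.equivMapDomain_apply, Equiv.Perm.mul_apply, mul_assoc]
    rfl

/-- The action of `Γ` on `Multiplicative (⊕_Γ A)` used to build the wreath product. -/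
noncomputable def wreathφ : Γ →* MulAut (Multiplicative (Γ →₀ A)) where
  toFun γ := AddEquiv.toMultiplicative (shiftHom A Γ γ)
  map_one' := by ext x; simp
  map_mul' γ γ' := by ext x; simp

/-- The restricted wreath product `A ≀ Γ = (⊕_Γ A) ⋊ Γ`. -/
noncomputable abbrev Wreath := SemidirectProduct (Multiplicative (Γ →₀ A)) Γ (wreathφ A Γ)

open scoped commutatorElement in
/-- The mixed commutator length `cl_{G,N}` (∞ if not a product of mixed commutators). -/
noncomputable def clGN {G : Type*} [Group G] (N : Subgroup G) (x : G) : ℕ∞ :=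
  sInf {n : ℕ∞ | ∃ k : ℕ, n = k ∧ ∃ g v : Fin k → G, (∀ i, v i ∈ N) ∧
    x = (List.ofFn fun i => ⁅g i, v i⁆).prod}

/-- The rank of a subgroup: minimal size of a generating set. -/
noncomputable def rk {G : Type*} [Group G] (H : Subgroup G) : ℕ∞ :=
  sInf {n : ℕ∞ | ∃ S : Finset G, Subgroup.closure (S : Set G) = H ∧ n = S.card}

/-- The intermediate rank `intrk^Γ(Λ) = inf {rk Θ | Λ ≤ Θ ≤ Γ}`. -/
noncomputable def intrk {G : Type*} [Group G] (Λ : Subgroup G) : ℕ∞ :=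
  sInf {n : ℕ∞ | ∃ Θ : Subgroup G, Λ ≤ Θ ∧ n = rk Θ}

/-- The general rank in the sense of Malcev. -/
noncomputable def genrk (G : Type*) [Group G] : ℕ∞ :=
  sSup {n : ℕ∞ | ∃ Λ : Subgroup G, Λ.FG ∧ n = intrk Λ}

/-- The special rank in the sense of Malcev. -/
noncomputable def sperk (G : Type*) [Group G] : ℕ∞ :=
  sSup {n : ℕ∞ | ∃ Λ : Subgroup G, Λ.FG ∧ n = rk Λ}


/-!
Write `N = ⊕_Γ A` additively, with `Γ` acting by left shifts. In `A ≀ Γ` the commutator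
`⁅s, a⁆` of `s ∈ Γ` and `a ∈ N` is `s • a - a`, so it suffices to write `x` as
`∑_{s ∈ S} (s • a_s - a_s)` for a finite generating set `S` of `Θ`. The set `M_S` of such sums
(the range of `shiftSubSum S`) is a subgroup, and it is stable under right translations because these commute with left shifts.
Hence `δ_θ - δ_1 ∈ M_S` for every `θ ∈ Θ` by induction on words in `S`, using
`δ_{θθ'} - δ_1 = (δ_θ - δ_1) θ' + (δ_θ' - δ_1)`; and a function supported in `Θ` with total sum
zero is the sum of `x(θ) (δ_θ - δ_1)`.
-/

open scoped commutatorElement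

section CommutatorLength

variable {G : Type*} [Group G] (N : Subgroup G)

theorem list_prod_commutatorElement_mem_commutator (l : List (G × G)) (hl : ∀ p ∈ l, p.2 ∈ N) :
    (l.map fun p => ⁅p.1, p.2⁆).prod ∈ ⁅(⊤ : Subgroup G), N⁆ :=
  Subgroup.list_prod_mem _ <| by
    simp only [List.mem_map]
    rintro _ ⟨p, hp, rfl⟩
    exact Subgroup.commutator_mem_commutator (Subgroup.mem_top _) (hl p hp)

theorem clGN_list_prod_commutatorElement_le (l : List (G × G)) (hl : ∀ p ∈ l, p.2 ∈ N) :
    clGN N (l.map fun p => ⁅p.1, p.2⁆).prod ≤ l.length :=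
  sInf_le ⟨l.length, rfl, fun i => l[i].1, fun i => l[i].2, fun i => hl _ (List.getElem_mem _),
    congrArg List.prod (List.ofFn_getElem_eq_map l fun p => ⁅p.1, p.2⁆).symm⟩

end CommutatorLength

namespace SemidirectProduct

variable {N G : Type*} [Group N] [Group G] {φ : G →* MulAut N}

theorem commutatorElement_inr_inl (g : G) (n : N) :
    ⁅(inr g : N ⋊[φ] G), (inl n : N ⋊[φ] G)⁆ = inl (φ g n * n⁻¹) := by
  rw [commutatorElement_def, map_mul, inl_aut, map_inv, map_inv]

end SemidirectProduct

section Wreath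

variable {A Γ}

theorem shiftHom_apply (s : Γ) (a : Γ →₀ A) (γ : Γ) : shiftHom A Γ s a γ = a (s⁻¹ * γ) := rfl

theorem shiftHom_single (s θ : Γ) (c : A) :
    shiftHom A Γ s (Finsupp.single θ c) = Finsupp.single (s * θ) c :=
  Finsupp.equivMapDomain_single _ _ _

theorem shiftHom_domCongr_mulRight (s γ : Γ) (a : Γ →₀ A) :
    shiftHom A Γ s (Finsupp.domCongr (Equiv.mulRight γ) a) =
      Finsupp.domCongr (Equiv.mulRight γ) (shiftHom A Γ s a) := by
  ext b
  simp [shiftHom_apply, mul_assoc]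

theorem commutatorElement_inr_inl_ofAdd (s : Γ) (a : Γ →₀ A) :
    ⁅(SemidirectProduct.inr s : Wreath A Γ),
        (SemidirectProduct.inl (Multiplicative.ofAdd a) : Wreath A Γ)⁆ =
      SemidirectProduct.inl (Multiplicative.ofAdd (shiftHom A Γ s a - a)) := by
  rw [SemidirectProduct.commutatorElement_inr_inl, sub_eq_add_neg, ofAdd_add, ofAdd_neg]
  rfl

noncomputable def shiftSubSum (S : Finset Γ) : (Γ → Γ →₀ A) →+ (Γ →₀ A) :=
  ∑ s ∈ S, ((shiftHom A Γ s).toAddMonoidHom - AddMonoidHom.id _).comp (Pi.evalAddMonoidHom _ s)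

theorem shiftSubSum_apply (S : Finset Γ) (a : Γ → Γ →₀ A) :
    shiftSubSum S a = ∑ s ∈ S, (shiftHom A Γ s (a s) - a s) := by
  simp [shiftSubSum]

theorem domCongr_mulRight_mem_range_shiftSubSum {S : Finset Γ} (γ : Γ) {y : Γ →₀ A}
    (hy : y ∈ (shiftSubSum S).range) :
    Finsupp.domCongr (Equiv.mulRight γ) y ∈ (shiftSubSum S).range := by
  obtain ⟨a, rfl⟩ := hy
  refine ⟨fun s => Finsupp.domCongr (Equiv.mulRight γ) (a s), ?_⟩
  simp only [shiftSubSum_apply, map_sum, map_sub, shiftHom_domCongr_mulRight]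

theorem single_sub_single_one_mem_range_shiftSubSum {S : Finset Γ} {θ : Γ}
    (hθ : θ ∈ Subgroup.closure (S : Set Γ)) (c : A) :
    Finsupp.single θ c - Finsupp.single 1 c ∈ (shiftSubSum S).range := by
  have translate (γ θ : Γ) :
      Finsupp.domCongr (Equiv.mulRight γ) (Finsupp.single θ c - Finsupp.single 1 c) =
        Finsupp.single (θ * γ) c - Finsupp.single γ c := by
    rw [map_sub]
    simp [Finsupp.domCongr_apply, Finsupp.equivMapDomain_single]
  induction hθ using Subgroup.closure_induction with
  | mem s hs =>
    classical
    refine ⟨Pi.single s (Finsupp.single 1 c), ?_⟩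
    rw [shiftSubSum_apply, Finset.sum_eq_single_of_mem s hs fun t _ hts => by simp [hts]]
    simp [shiftHom_single]
  | one => simp
  | mul θ θ' _ _ ih ih' =>
    have h : Finsupp.single (θ * θ') c - Finsupp.single 1 c =
        Finsupp.domCongr (Equiv.mulRight θ') (Finsupp.single θ c - Finsupp.single 1 c) +
          (Finsupp.single θ' c - Finsupp.single 1 c) := by
      rw [translate]; abel
    rw [h]
    exact add_mem (domCongr_mulRight_mem_range_shiftSubSum θ' ih) ih'
  | inv θ _ ih =>
    have h : Finsupp.single θ⁻¹ c - Finsupp.single 1 c =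
        -Finsupp.domCongr (Equiv.mulRight θ⁻¹) (Finsupp.single θ c - Finsupp.single 1 c) := by
      rw [translate, mul_inv_cancel, neg_sub]
    rw [h]
    exact neg_mem (domCongr_mulRight_mem_range_shiftSubSum θ⁻¹ ih)

theorem mem_range_shiftSubSum {S : Finset Γ} {x : Γ →₀ A}
    (hsupp : (x.support : Set Γ) ⊆ Subgroup.closure (S : Set Γ))
    (hsum : ∑ θ ∈ x.support, x θ = 0) : x ∈ (shiftSubSum S).range := by
  have hx : x = ∑ θ ∈ x.support, (Finsupp.single θ (x θ) - Finsupp.single 1 (x θ)) := by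
    rw [Finset.sum_sub_distrib, ← Finsupp.single_finsetSum, hsum, Finsupp.single_zero, sub_zero]
    exact (Finsupp.sum_single x).symm
  rw [hx]
  exact sum_mem fun θ hθ => single_sub_single_one_mem_range_shiftSubSum (hsupp hθ) _

theorem inl_ofAdd_shiftSubSum_eq_list_prod (S : Finset Γ) (a : Γ → Γ →₀ A) :
    (SemidirectProduct.inl (Multiplicative.ofAdd (shiftSubSum S a)) : Wreath A Γ) =
      ((S.toList.map fun s => ((SemidirectProduct.inr s : Wreath A Γ),
        SemidirectProduct.inl (Multiplicative.ofAdd (a s)))).map fun p => ⁅p.1, p.2⁆).prod := by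
  simp only [List.map_map, Function.comp_def, commutatorElement_inr_inl_ofAdd]
  rw [shiftSubSum_apply, ofAdd_sum, ← Finset.prod_map_toList, map_list_prod, List.map_map]
  rfl

theorem inl_ofAdd_mem_commutator_and_clGN_le {S : Finset Γ} {x : Γ →₀ A}
    (hx : x ∈ (shiftSubSum S).range) :
    SemidirectProduct.inl (Multiplicative.ofAdd x) ∈
        ⁅(⊤ : Subgroup (Wreath A Γ)),
          (SemidirectProduct.inl : Multiplicative (Γ →₀ A) →* Wreath A Γ).range⁆ ∧
      clGN (SemidirectProduct.inl : Multiplicative (Γ →₀ A) →* Wreath A Γ).range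
        (SemidirectProduct.inl (Multiplicative.ofAdd x)) ≤ S.card := by
  obtain ⟨a, rfl⟩ := hx
  have hl : ∀ p ∈ S.toList.map fun s => ((SemidirectProduct.inr s : Wreath A Γ),
      SemidirectProduct.inl (Multiplicative.ofAdd (a s))),
      p.2 ∈ (SemidirectProduct.inl : Multiplicative (Γ →₀ A) →* Wreath A Γ).range := by
    simp
  rw [inl_ofAdd_shiftSubSum_eq_list_prod]
  refine ⟨list_prod_commutatorElement_mem_commutator _ _ hl, ?_⟩
  simpa using clGN_list_prod_commutatorElement_le _ _ hl

end Wreath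

theorem clGN_le_rank_general {Γ : Type*} [Group Γ] (Θ : Subgroup Γ) (hfg : Θ.FG)
    [DecidablePred (· ∈ Θ)] (x : Γ →₀ ℤ)
    (hsupp : (x.support : Set Γ) ⊆ (Θ : Set Γ))
    (hsum : ∑ a ∈ x.support, (if a ∈ Θ then x a else 0) = 0) :
    SemidirectProduct.inl (Multiplicative.ofAdd x) ∈
      ⁅(⊤ : Subgroup (Wreath ℤ Γ)),
        (SemidirectProduct.inl : Multiplicative (Γ →₀ ℤ) →* Wreath ℤ Γ).range⁆ ∧
    clGN (SemidirectProduct.inl : Multiplicative (Γ →₀ ℤ) →* Wreath ℤ Γ).range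
        (SemidirectProduct.inl (Multiplicative.ofAdd x)) ≤ rk Θ := by
  rw [Finset.sum_ite_of_true fun θ hθ => show θ ∈ Θ from hsupp hθ] at hsum
  have bound (S : Finset Γ) (hS : Subgroup.closure (S : Set Γ) = Θ) :=
    inl_ofAdd_mem_commutator_and_clGN_le (mem_range_shiftSubSum (hS ▸ hsupp) hsum)
  obtain ⟨S₀, hS₀⟩ := hfg
  exact ⟨(bound S₀ hS₀).1, le_sInf fun _ ⟨S, hS, hn⟩ => hn ▸ (bound S hS).2⟩

/-- upper bound for the mixed commutator length in `ℤ ≀ Γ`. -/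
theorem clGN_le_rank {Γ : Type*} [Group Γ] (Θ : Subgroup Γ) (hΘ : Θ ≠ ⊥) (hfg : Θ.FG)
    [DecidablePred (· ∈ Θ)] (x : Γ →₀ ℤ)
    (hsupp : (x.support : Set Γ) ⊆ (Θ : Set Γ))
    (hsum : ∑ a ∈ x.support, (if a ∈ Θ then x a else 0) = 0) :
    SemidirectProduct.inl (Multiplicative.ofAdd x) ∈
      ⁅(⊤ : Subgroup (Wreath ℤ Γ)),
        (SemidirectProduct.inl : Multiplicative (Γ →₀ ℤ) →* Wreath ℤ Γ).range⁆ ∧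
    clGN (SemidirectProduct.inl : Multiplicative (Γ →₀ ℤ) →* Wreath ℤ Γ).range
        (SemidirectProduct.inl (Multiplicative.ofAdd x)) ≤ rk Θ :=
  clGN_le_rank_general Θ hfg x hsupp hsum
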